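/- Let Γ be a finite connected simple graph with vertex set V, let 𝒯 be a maximal tubing of Γ, and let w be its weight vector. Then, as functions V → ℤ, w = Σ_{T ∈ 𝒯} (Σ_{v ∈ T} w(v)) · (1_{v_T} − 1_{v_{σ(T)}}) + 3^{|V|−2} · 1_{v_V}, where for each T ∈ 𝒯 ∪ {V}, v_T is the unique vertex of T not contained in any element of 𝒯 properly contained in T, and σ(T) is the minimal element of 𝒯 ∪ {V} properly containing T. (Equivalently, for positive reals (x_v)_{v∈V}: ∏_v x_v^{w(v)} = ∏_{T∈𝒯} (x_{v_T}/x_{v_{σ(T)}})^{Σ_{v∈T} w(v)} · x_{v_V}^{3^{|V|−2}}.) -/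

import Mathlib

variable {V : Type*} [Fintype V] [DecidableEq V]

/-- A tube of a simple graph: a nonempty proper subset of vertices whose
induced subgraph is connected. -/
def IsTube (G : SimpleGraph V) (T : Finset V) : Prop :=
  T.Nonempty ∧ T ≠ Finset.univ ∧ (G.induce (T : Set V)).Connected

/-- A tubing: a set of tubes, pairwise either properly nested or disjoint with
no edge between them. -/
def IsTubing (G : SimpleGraph V) (𝒯 : Finset (Finset V)) : Prop :=
  (∀ T ∈ 𝒯, IsTube G T) ∧
  ∀ T ∈ 𝒯, ∀ T' ∈ 𝒯, T ≠ T' →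
    T ⊂ T' ∨ T' ⊂ T ∨
      ((∀ v ∈ T, v ∉ T') ∧ ∀ u ∈ T, ∀ v ∈ T', ¬ G.Adj u v)

/-- A maximal tubing: one not properly contained in any other tubing. -/
def IsMaxTubing (G : SimpleGraph V) (𝒯 : Finset (Finset V)) : Prop :=
  IsTubing G 𝒯 ∧ ∀ 𝒯' : Finset (Finset V), IsTubing G 𝒯' → 𝒯 ⊆ 𝒯' → 𝒯' = 𝒯

/-- `w` is the weight vector of the maximal tubing `𝒯`: for each vertex `v`,
if the minimal element `T` of `𝒯 ∪ {univ}` containing `v` is the singleton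
`{v}` then `w v = 0`, and otherwise (`|T| ≥ 2`)
`w v = 3^(|T|-2) - ∑_{v' ∈ T, v' ≠ v} w v'`. -/
def IsWeightVector (𝒯 : Finset (Finset V)) (w : V → ℤ) : Prop :=
  ∀ v : V, ∀ T ∈ insert Finset.univ 𝒯, v ∈ T →
    (∀ S ∈ insert Finset.univ 𝒯, v ∈ S → T ⊆ S) →
    (T = {v} → w v = 0) ∧
    (2 ≤ T.card → w v = 3 ^ (T.card - 2) - ∑ v' ∈ T.erase v, w v')

/-- The indicator function of a vertex, with values in `ℤ`. -/
def indic (a u : V) : ℤ := if u = a then 1 else 0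


/-!
Evaluated at `u`, the right-hand side telescopes. Let `M` be the smallest member of `𝒯 ∪ {V}`
containing `u`. In a maximal tubing every `T` has a unique root (two roots would let one add the
connected component of one of them in `T` minus the other), so `v_T = u` exactly when `T = M`,
and the tubes with `σ(T) = M` partition `M \ {u}`. Since the recursion at `v_V` gives
`∑_V w = 3^(|V|-2)`, the right-hand side is `∑_M w - ∑_{M \ {u}} w = w(u)`.
-/

open Finset

section Separation

variable {α : Type*} {G : SimpleGraph α} {A B C : Finset α}

def AreSeparated (G : SimpleGraph α) (A B : Finset α) : Prop :=
  (∀ v ∈ A, v ∉ B) ∧ ∀ a ∈ A, ∀ b ∈ B, ¬ G.Adj a b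

lemma AreSeparated.symm (h : AreSeparated G A B) : AreSeparated G B A :=
  ⟨fun v hB hA ↦ h.1 v hA hB, fun b hb a ha hba ↦ h.2 a ha b hb hba.symm⟩

lemma AreSeparated.mono_left (h : AreSeparated G A B) (hCA : C ⊆ A) : AreSeparated G C B :=
  ⟨fun v hv ↦ h.1 v (hCA hv), fun a ha ↦ h.2 a (hCA ha)⟩

lemma AreSeparated.disjoint (h : AreSeparated G A B) : Disjoint A B :=
  disjoint_left.2 h.1

def AreCompatible (G : SimpleGraph α) (A B : Finset α) : Prop :=
  A ⊂ B ∨ B ⊂ A ∨ AreSeparated G A B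

lemma AreCompatible.symm (h : AreCompatible G A B) : AreCompatible G B A := by
  rcases h with h | h | h
  exacts [Or.inr (Or.inl h), Or.inl h, Or.inr (Or.inr h.symm)]

/-- `C` is the connected component of `u` in the subgraph induced on `s`. -/
lemma exists_connected_subset_forall_subset_or_separated [DecidableEq α] (G : SimpleGraph α)
    {s : Finset α} {u : α} (hu : u ∈ s) :
    ∃ C ⊆ s, u ∈ C ∧ (G.induce (C : Set α)).Connected ∧
      ∀ S ⊆ s, (G.induce (S : Set α)).Connected → S ⊆ C ∨ AreSeparated G C S := by
  classical
  set F : Finset (Finset α) := {C ∈ s.powerset | u ∈ C ∧ (G.induce (C : Set α)).Connected}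
  have hmemF {C : Finset α} : C ∈ F ↔ C ⊆ s ∧ u ∈ C ∧ (G.induce (C : Set α)).Connected := by
    simp [F]
  obtain ⟨C, -, hC⟩ := F.exists_le_maximal (a := {u}) <| hmemF.2
    ⟨singleton_subset_iff.2 hu, mem_singleton_self u, by
      rw [coe_singleton, SimpleGraph.induce_singleton_eq_top]
      exact SimpleGraph.connected_top⟩
  obtain ⟨hCs, huC, hCconn⟩ := hmemF.1 hC.prop
  refine ⟨C, hCs, huC, hCconn, fun S hSs hSconn ↦ ?_⟩
  have hunion (hconn : (G.induce ((C ∪ S : Finset α) : Set α)).Connected) : S ⊆ C :=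
    subset_union_right.trans <| hC.2 (hmemF.2 ⟨union_subset hCs hSs,
      mem_union_left _ huC, hconn⟩) subset_union_left
  by_cases hmeet : ∃ v ∈ C, v ∈ S
  · obtain ⟨v, hvC, hvS⟩ := hmeet
    refine Or.inl (hunion ?_)
    rw [coe_union]
    exact SimpleGraph.induce_union_connected hCconn.preconnected hSconn.preconnected ⟨v, hvC, hvS⟩
  push Not at hmeet
  refine Or.inr ⟨hmeet, fun a ha b hb hab ↦ hmeet b ?_ hb⟩
  refine hunion ?_ hb
  rw [coe_union]
  exact SimpleGraph.connected_induce_union hCconn.preconnected hSconn.preconnected ha hb hab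

end Separation

section Tubings

variable {G : SimpleGraph V} {𝒯 : Finset (Finset V)} {C S T : Finset V} {u v : V}

omit [DecidableEq V] in
lemma IsTubing.univ_notMem (h : IsTubing G 𝒯) : univ ∉ 𝒯 :=
  fun hu ↦ (h.1 univ hu).2.1 rfl

lemma IsTubing.insert_of_compatible (h : IsTubing G 𝒯) (hC : IsTube G C)
    (hcompat : ∀ S ∈ 𝒯, S ≠ C → AreCompatible G C S) : IsTubing G (insert C 𝒯) := by
  refine ⟨fun S hS ↦ ?_, fun A hA B hB hAB ↦ ?_⟩
  · rcases mem_insert.1 hS with rfl | hS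
    exacts [hC, h.1 S hS]
  rcases mem_insert.1 hA with rfl | hA'
  · exact hcompat B ((mem_insert.1 hB).resolve_left hAB.symm) hAB.symm
  rcases mem_insert.1 hB with rfl | hB'
  · exact (hcompat A hA' hAB).symm
  · exact h.2 A hA' B hB' hAB

lemma IsTubing.ssubset_or_subset_or_separated (h : IsTubing G 𝒯) (hS : S ∈ 𝒯)
    (hT : T ∈ insert univ 𝒯) : S ⊂ T ∨ T ⊆ S ∨ AreSeparated G S T := by
  rcases mem_insert.1 hT with rfl | hT
  · exact Or.inl (ssubset_univ_iff.2 (h.1 S hS).2.1)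
  by_cases hST : S = T
  · exact Or.inr (Or.inl hST.ge)
  rcases h.2 S hS T hT hST with h' | h' | h'
  exacts [Or.inl h', Or.inr (Or.inl h'.subset), Or.inr (Or.inr h')]

lemma IsTubing.subset_or_subset (h : IsTubing G 𝒯) (hS : S ∈ insert univ 𝒯)
    (hT : T ∈ insert univ 𝒯) (hvS : v ∈ S) (hvT : v ∈ T) : S ⊆ T ∨ T ⊆ S := by
  rcases mem_insert.1 hS with rfl | hS
  · exact Or.inr (subset_univ T)
  rcases h.ssubset_or_subset_or_separated hS hT with h' | h' | h'
  exacts [Or.inl h'.subset, Or.inr h', absurd hvT (h'.1 v hvS)]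

lemma IsTubing.exists_minimal_mem (h : IsTubing G 𝒯) (v : V) :
    ∃ M ∈ insert univ 𝒯, v ∈ M ∧ ∀ S ∈ insert univ 𝒯, v ∈ S → M ⊆ S := by
  obtain ⟨M, hM⟩ := ({S ∈ insert univ 𝒯 | v ∈ S}).exists_minimal
    ⟨univ, mem_filter.2 ⟨mem_insert_self _ _, mem_univ v⟩⟩
  obtain ⟨hM𝒯, hvM⟩ := mem_filter.1 hM.prop
  refine ⟨M, hM𝒯, hvM, fun S hS hvS ↦ ?_⟩
  rcases h.subset_or_subset hM𝒯 hS hvM hvS with hMS | hSM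
  exacts [hMS, hM.2 (mem_filter.2 ⟨hS, hvS⟩) hSM]

/-- The vertices `u` with `IsRoot 𝒯 T u` are the candidates for the paper's `v_T`. -/
def IsRoot (𝒯 : Finset (Finset V)) (T : Finset V) (u : V) : Prop :=
  u ∈ T ∧ ∀ S ∈ 𝒯, S ⊂ T → u ∉ S

lemma IsTubing.isRoot_iff (h : IsTubing G 𝒯) (hT : T ∈ insert univ 𝒯) (hu : u ∈ T) :
    IsRoot 𝒯 T u ↔ ∀ S ∈ insert univ 𝒯, u ∈ S → T ⊆ S := by
  refine ⟨fun hroot S hS huS ↦ ?_, fun hmin ↦ ⟨hu, fun S hS hST huS ↦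
    hST.not_subset (hmin S (mem_insert_of_mem hS) huS)⟩⟩
  rcases h.subset_or_subset hT hS hu huS with hTS | hST
  · exact hTS
  obtain rfl | hST := hST.eq_or_ssubset
  · exact subset_rfl
  exact absurd huS <|
    hroot.2 S (mem_of_mem_insert_of_ne hS (hST.trans_subset (subset_univ T)).ne) hST

/-- If `u ≠ u'` were both roots of `T`, the connected component of `u` in `T \ {u'}` would be a
tube compatible with `𝒯`, hence in `𝒯` by maximality, although it lies properly inside `T`. -/
lemma IsMaxTubing.isRoot_unique (h : IsMaxTubing G 𝒯) (hT : T ∈ insert univ 𝒯)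
    {u' : V} (hu : IsRoot 𝒯 T u) (hu' : IsRoot 𝒯 T u') : u = u' := by
  by_contra hne
  obtain ⟨C, hCs, huC, hCconn, hCmax⟩ :=
    exists_connected_subset_forall_subset_or_separated G (mem_erase.2 ⟨hne, hu.1⟩)
  have hCT : C ⊂ T := hCs.trans_ssubset (erase_ssubset hu'.1)
  have hCtube : IsTube G C := ⟨⟨u, huC⟩, (hCT.trans_subset (subset_univ T)).ne, hCconn⟩
  have hcompat : ∀ S ∈ 𝒯, S ≠ C → AreCompatible G C S := by
    intro S hS hSC
    rcases h.1.ssubset_or_subset_or_separated hS hT with hST | hTS | hsep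
    · have hSs : S ⊆ T.erase u' := fun x hx ↦
        mem_erase.2 ⟨fun hxu ↦ hu'.2 S hS hST (hxu ▸ hx), hST.subset hx⟩
      rcases hCmax S hSs (h.1.1 S hS).2.2 with hSC' | hsep
      exacts [Or.inr (Or.inl (hSC'.ssubset_of_ne hSC)), Or.inr (Or.inr hsep)]
    · exact Or.inl (hCT.trans_subset hTS)
    · exact Or.inr (Or.inr (hsep.symm.mono_left hCT.subset))
  have hC𝒯 : C ∈ 𝒯 :=
    h.2 _ (h.1.insert_of_compatible hCtube hcompat) (subset_insert _ _) ▸ mem_insert_self C 𝒯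
  exact hu.2 C hC𝒯 hCT huC

section Children

variable (σ : Finset V → Finset V)
  (hσ : ∀ T ∈ 𝒯, σ T ∈ insert univ 𝒯 ∧ T ⊂ σ T ∧ ∀ S ∈ insert univ 𝒯, T ⊂ S → σ T ⊆ S)
include hσ

lemma IsTubing.pairwiseDisjoint_children (h : IsTubing G 𝒯) (M : Finset V) :
    (({T ∈ 𝒯 | σ T = M} : Finset _) : Set (Finset V)).PairwiseDisjoint id := by
  intro A hA B hB hAB
  obtain ⟨hA𝒯, hAM⟩ := mem_filter.1 hA
  obtain ⟨hB𝒯, hBM⟩ := mem_filter.1 hB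
  have hnot {X Y : Finset V} (hX : X ∈ 𝒯) (hY : Y ∈ 𝒯) (hXM : σ X = M) (hYM : σ Y = M) :
      ¬ X ⊂ Y := fun hXY ↦
    (hYM ▸ (hσ Y hY).2.1).not_subset (hXM ▸ (hσ X hX).2.2 Y (mem_insert_of_mem hY) hXY)
  rcases h.2 A hA𝒯 B hB𝒯 hAB with hAB' | hBA | hsep
  exacts [absurd hAB' (hnot hA𝒯 hB𝒯 hAM hBM), absurd hBA (hnot hB𝒯 hA𝒯 hBM hAM),
    AreSeparated.disjoint hsep]

/-- A non-root vertex of `M` lies in a maximal tube properly inside `M`, whose parent is `M`. -/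
lemma IsMaxTubing.biUnion_children (h : IsMaxTubing G 𝒯) {M : Finset V}
    (hM : M ∈ insert univ 𝒯) (hu : IsRoot 𝒯 M u) :
    ({T ∈ 𝒯 | σ T = M} : Finset _).biUnion id = M.erase u := by
  ext v
  simp only [mem_biUnion, mem_filter, id, mem_erase]
  constructor
  · rintro ⟨T, ⟨hT, rfl⟩, hvT⟩
    have hTM := (hσ T hT).2.1
    exact ⟨fun hvu ↦ hu.2 T hT hTM (hvu ▸ hvT), hTM.subset hvT⟩
  rintro ⟨hvu, hvM⟩
  have hnotroot : ¬ IsRoot 𝒯 M v := fun hv ↦ hvu (h.isRoot_unique hM hv hu)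
  simp only [IsRoot, hvM, true_and, not_forall, not_not] at hnotroot
  obtain ⟨S, hS, hSM, hvS⟩ := hnotroot
  obtain ⟨T, hST, hT⟩ := ({T ∈ 𝒯 | v ∈ T ∧ T ⊂ M}).exists_le_maximal
    (mem_filter.2 ⟨hS, hvS, hSM⟩)
  obtain ⟨hT𝒯, hvT, hTM⟩ := mem_filter.1 hT.prop
  obtain ⟨hσT, hTσ, hσmin⟩ := hσ T hT𝒯
  refine ⟨T, ⟨hT𝒯, ?_⟩, hvT⟩
  by_contra hne
  have hσM : σ T ⊂ M := (hσmin M hM hTM).ssubset_of_ne hne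
  have hσ𝒯 : σ T ∈ 𝒯 := mem_of_mem_insert_of_ne hσT (hσM.trans_subset (subset_univ M)).ne
  exact hTσ.not_subset (hT.2 (mem_filter.2 ⟨hσ𝒯, hTσ.subset hvT, hσM⟩) hTσ.subset)

end Children

end Tubings

lemma IsWeightVector.sum_eq {𝒯 : Finset (Finset V)} {w : V → ℤ} (hw : IsWeightVector 𝒯 w)
    {T : Finset V} (hT : T ∈ insert univ 𝒯) (hT2 : 2 ≤ #T) {r : V} (hr : r ∈ T)
    (hmin : ∀ S ∈ insert univ 𝒯, r ∈ S → T ⊆ S) : ∑ v ∈ T, w v = 3 ^ (#T - 2) := by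
  rw [← add_sum_erase T w hr, (hw r T hT hr hmin).2 hT2]
  ring

theorem weight_vector_decomposition_general
    (G : SimpleGraph V) (hV : 2 ≤ Fintype.card V)
    (𝒯 : Finset (Finset V)) (h : IsMaxTubing G 𝒯)
    (w : V → ℤ) (hw : IsWeightVector 𝒯 w)
    (vT : Finset V → V)
    (hvT : ∀ T ∈ insert Finset.univ 𝒯,
      vT T ∈ T ∧ ∀ S ∈ 𝒯, S ⊂ T → vT T ∉ S)
    (σ : Finset V → Finset V)
    (hσ : ∀ T ∈ 𝒯, σ T ∈ insert Finset.univ 𝒯 ∧ T ⊂ σ T ∧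
      ∀ S ∈ insert Finset.univ 𝒯, T ⊂ S → σ T ⊆ S) :
    ∀ u : V,
      w u = (∑ T ∈ 𝒯, (∑ v ∈ T, w v) * (indic (vT T) u - indic (vT (σ T)) u))
        + 3 ^ (Fintype.card V - 2) * indic (vT Finset.univ) u := by
  intro u
  have huniv := mem_insert_self univ 𝒯
  have hsum_univ : ∑ v, w v = 3 ^ (Fintype.card V - 2) := by
    simpa using hw.sum_eq huniv (by simpa using hV) (mem_univ _)
      ((h.1.isRoot_iff huniv (mem_univ _)).1 (hvT univ huniv))
  obtain ⟨M, hM, huM, hMmin⟩ := h.1.exists_minimal_mem u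
  have hMroot : IsRoot 𝒯 M u := (h.1.isRoot_iff hM huM).2 hMmin
  have hindic : ∀ T ∈ insert univ 𝒯, indic (vT T) u = if T = M then 1 else 0 := by
    intro T hT
    have hroot : IsRoot 𝒯 T (vT T) := hvT T hT
    by_cases hTM : T = M
    · subst hTM
      rw [if_pos rfl, indic, if_pos (h.isRoot_unique hT hMroot hroot)]
    · refine (if_neg fun huT ↦ hTM ?_).trans (if_neg hTM).symm
      subst huT
      exact (hMmin T hT hroot.1).antisymm' ((h.1.isRoot_iff hT hroot.1).1 hroot M hM huM)
  have hparent : ∑ T ∈ 𝒯, (∑ v ∈ T, w v) * indic (vT (σ T)) u = ∑ v ∈ M.erase u, w v := by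
    rw [← h.biUnion_children σ hσ hM hMroot, sum_biUnion (h.1.pairwiseDisjoint_children σ hσ M),
      sum_filter]
    exact sum_congr rfl fun T hT ↦ by
      rw [hindic (σ T) (hσ T hT).1, mul_ite, mul_one, mul_zero, id]
  have hself : ∑ T ∈ insert univ 𝒯, (∑ v ∈ T, w v) * indic (vT T) u = ∑ v ∈ M, w v := by
    rw [sum_congr rfl fun T hT ↦ by rw [hindic T hT, mul_ite, mul_one, mul_zero],
      sum_ite_eq' _ _ _, if_pos hM]
  rw [sum_insert h.1.univ_notMem, hsum_univ] at hself
  have hwu : w u = ∑ v ∈ M, w v - ∑ v ∈ M.erase u, w v := by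
    rw [← add_sum_erase M w huM]
    ring
  rw [hwu, ← hself, ← hparent]
  simp only [mul_sub, sum_sub_distrib]
  ring

theorem weight_vector_decomposition
    (G : SimpleGraph V) (hG : G.Connected) (hV : 2 ≤ Fintype.card V)
    (𝒯 : Finset (Finset V)) (h : IsMaxTubing G 𝒯)
    (w : V → ℤ) (hw : IsWeightVector 𝒯 w)
    (vT : Finset V → V)
    (hvT : ∀ T ∈ insert Finset.univ 𝒯,
      vT T ∈ T ∧ ∀ S ∈ 𝒯, S ⊂ T → vT T ∉ S)
    (σ : Finset V → Finset V)
    (hσ : ∀ T ∈ 𝒯, σ T ∈ insert Finset.univ 𝒯 ∧ T ⊂ σ T ∧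
      ∀ S ∈ insert Finset.univ 𝒯, T ⊂ S → σ T ⊆ S) :
    ∀ u : V,
      w u = (∑ T ∈ 𝒯, (∑ v ∈ T, w v) * (indic (vT T) u - indic (vT (σ T)) u))
        + 3 ^ (Fintype.card V - 2) * indic (vT Finset.univ) u :=
  weight_vector_decomposition_general G hV 𝒯 h w hw vT hvT σ hσ
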